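/- In any stable matching instance with n boys and n girls, the minimum winning coalition of girls has cardinality at most ⌊n/2⌋. -/

import Mathlib

/-- A stable matching instance with `n` boys and `n` girls. `rB b g` is the rank
boy `b` assigns to girl `g` (lower rank = more preferred); `rG g b` similarly. -/
structure SMInst (n : ℕ) where
  rB : Fin n → Fin n → Fin n
  rG : Fin n → Fin n → Fin n
  hB : ∀ b, Function.Injective (rB b)
  hG : ∀ g, Function.Injective (rG g)

namespace SMInst
variable {n : ℕ} (I : SMInst n)

/-- `(b,g)` is a blocking pair for the matching `μ` (boys to girls). -/
def Blocking (μ : Equiv.Perm (Fin n)) (b g : Fin n) : Prop :=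
  I.rB b g < I.rB b (μ b) ∧ I.rG g b < I.rG g (μ.symm g)

/-- A matching is stable if it has no blocking pair. -/
def Stable (μ : Equiv.Perm (Fin n)) : Prop := ∀ b g, ¬ I.Blocking μ b g

/-- `μ0` is the girl-optimal stable matching. -/
def GirlOptimal (μ0 : Equiv.Perm (Fin n)) : Prop :=
  I.Stable μ0 ∧ ∀ μ, I.Stable μ → ∀ g, I.rG g (μ0.symm g) ≤ I.rG g (μ.symm g)

/-- `b` is girl `g`'s best stable partner. -/
def IsBestPartner (g b : Fin n) : Prop :=
  (∃ μ, I.Stable μ ∧ μ b = g) ∧ ∀ μ, I.Stable μ → I.rG g b ≤ I.rG g (μ.symm g)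

/-- A coalition `F` of girls is winning (relative to the girl-optimal matching `μ0`)
if the unique stable matching giving every girl in `F` her best stable partner is `μ0`. -/
def Winning (μ0 : Equiv.Perm (Fin n)) (F : Finset (Fin n)) : Prop :=
  {μ : Equiv.Perm (Fin n) | I.Stable μ ∧ ∀ g ∈ F, I.IsBestPartner g (μ.symm g)} = {μ0}

/-- `μ` is a minimal element of the poset of stable matchings (ordered by the boys'
preferences) with the girl-optimal matching `μ0` removed. -/
def MinimalAboveOpt (μ0 μ : Equiv.Perm (Fin n)) : Prop :=
  I.Stable μ ∧ μ ≠ μ0 ∧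
    ∀ ν, I.Stable ν → ν ≠ μ0 → (∀ b, I.rB b (μ b) ≤ I.rB b (ν b)) → ν = μ

/-- The set of girls not matched to their best stable partner in `μ`. -/
def U (μ : Equiv.Perm (Fin n)) : Set (Fin n) :=
  {g | ¬ I.IsBestPartner g (μ.symm g)}

lemma rankG_lt_of_le_of_ne {g b b' : Fin n} (h : I.rG g b ≤ I.rG g b') (hne : b ≠ b') :
    I.rG g b < I.rG g b' :=
  lt_of_le_of_ne h (fun he => hne (I.hG g he))

lemma rankB_lt_of_le_of_ne {b g g' : Fin n} (h : I.rB b g ≤ I.rB b g') (hne : g ≠ g') :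
    I.rB b g < I.rB b g' :=
  lt_of_le_of_ne h (fun he => hne (I.hB b he))

lemma keyF {μ ν : Equiv.Perm (Fin n)} (hμ : I.Stable μ) (hν : I.Stable ν)
    {b g1 g2 : Fin n} (h1 : μ b = g1) (h2 : ν b = g2) (hne : g1 ≠ g2)
    (hr1 : I.rG g1 b ≤ I.rG g1 (ν.symm g1)) (hr2 : I.rG g2 b ≤ I.rG g2 (μ.symm g2)) :
    False := by
  have hb1 : b ≠ ν.symm g1 := by
    intro h
    apply hne
    rw [← h2, h]
    simp
  have hr1' : I.rG g1 b < I.rG g1 (ν.symm g1) := I.rankG_lt_of_le_of_ne hr1 hb1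
  have hnb : ¬ I.Blocking ν b g1 := hν b g1
  have hB1 : I.rB b (ν b) ≤ I.rB b g1 := by
    by_contra h
    exact hnb ⟨lt_of_not_ge h, hr1'⟩
  rw [h2] at hB1
  have hB1' : I.rB b g2 < I.rB b g1 := I.rankB_lt_of_le_of_ne hB1 hne.symm
  have hb2 : b ≠ μ.symm g2 := by
    intro h
    apply hne
    rw [← h1, h]
    simp
  have hr2' : I.rG g2 b < I.rG g2 (μ.symm g2) := I.rankG_lt_of_le_of_ne hr2 hb2
  exact hμ b g2 ⟨by rw [h1]; exact hB1', hr2'⟩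

/-- The girl-best choice among two matchings. -/
def fbest (μ ν : Equiv.Perm (Fin n)) (g : Fin n) : Fin n :=
  if I.rG g (μ.symm g) ≤ I.rG g (ν.symm g) then μ.symm g else ν.symm g

lemma fbest_or (μ ν : Equiv.Perm (Fin n)) (g : Fin n) :
    I.fbest μ ν g = μ.symm g ∨ I.fbest μ ν g = ν.symm g := by
  unfold fbest; split <;> simp

lemma fbest_le_left (μ ν : Equiv.Perm (Fin n)) (g : Fin n) :
    I.rG g (I.fbest μ ν g) ≤ I.rG g (μ.symm g) := by
  unfold fbest; split
  · exact le_refl _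
  · exact le_of_lt (lt_of_not_ge (by assumption))

lemma fbest_le_right (μ ν : Equiv.Perm (Fin n)) (g : Fin n) :
    I.rG g (I.fbest μ ν g) ≤ I.rG g (ν.symm g) := by
  unfold fbest; split
  · assumption
  · exact le_refl _

lemma fbest_inj {μ ν : Equiv.Perm (Fin n)} (hμ : I.Stable μ) (hν : I.Stable ν) :
    Function.Injective (I.fbest μ ν) := by
  intro g1 g2 hf
  by_contra hne
  rcases I.fbest_or μ ν g1 with h1 | h1 <;> rcases I.fbest_or μ ν g2 with h2 | h2
  · exact hne (μ.symm.injective (h1 ▸ h2 ▸ hf))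
  · -- fbest g1 = μ.symm g1, fbest g2 = ν.symm g2 ; b := fbest g1
    refine I.keyF hμ hν (b := I.fbest μ ν g1) (g1 := g1) (g2 := g2) ?_ ?_ hne ?_ ?_
    · rw [h1]; simp
    · rw [hf, h2]; simp
    · exact I.fbest_le_right μ ν g1
    · rw [hf]; exact I.fbest_le_left μ ν g2
  · refine I.keyF hν hμ (b := I.fbest μ ν g1) (g1 := g1) (g2 := g2) ?_ ?_ hne ?_ ?_
    · rw [h1]; simp
    · rw [hf, h2]; simp
    · exact I.fbest_le_left μ ν g1
    · rw [hf]; exact I.fbest_le_right μ ν g2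
  · exact hne (ν.symm.injective (h1 ▸ h2 ▸ hf))

lemma exists_gb {μ ν : Equiv.Perm (Fin n)} (hμ : I.Stable μ) (hν : I.Stable ν) :
    ∃ σ : Equiv.Perm (Fin n), I.Stable σ ∧ ∀ g, σ.symm g = I.fbest μ ν g := by
  have hbij : Function.Bijective (I.fbest μ ν) :=
    Finite.injective_iff_bijective.1 (I.fbest_inj hμ hν)
  refine ⟨(Equiv.ofBijective _ hbij).symm, ?_, fun g => rfl⟩
  intro b g hblock
  obtain ⟨hbB, hbG⟩ := hblock
  set σ : Equiv.Perm (Fin n) := (Equiv.ofBijective _ hbij).symm with hσ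
  have hfσ : I.fbest μ ν (σ b) = b := by
    show σ.symm (σ b) = b
    simp
  have hGg : I.rG g b < I.rG g (I.fbest μ ν g) := hbG
  rcases I.fbest_or μ ν (σ b) with h | h
  · have hbm : μ.symm (σ b) = b := by rw [← h, hfσ]
    have hμb : μ b = σ b := by rw [Equiv.apply_eq_iff_eq_symm_apply]; exact hbm.symm
    exact hμ b g ⟨by rw [hμb]; exact hbB, lt_of_lt_of_le hGg (I.fbest_le_left μ ν g)⟩
  · have hbm : ν.symm (σ b) = b := by rw [← h, hfσ]
    have hνb : ν b = σ b := by rw [Equiv.apply_eq_iff_eq_symm_apply]; exact hbm.symm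
    exact hν b g ⟨by rw [hνb]; exact hbB, lt_of_lt_of_le hGg (I.fbest_le_right μ ν g)⟩



lemma best_iff {μ0 μ : Equiv.Perm (Fin n)} (hopt : I.GirlOptimal μ0) (hμ : I.Stable μ)
    (g : Fin n) : I.IsBestPartner g (μ.symm g) ↔ μ.symm g = μ0.symm g := by
  constructor
  · intro hbp
    exact I.hG g (le_antisymm (hbp.2 μ0 hopt.1) (hopt.2 μ hμ g))
  · intro h
    rw [h]
    exact ⟨⟨μ0, hopt.1, by simp⟩, fun ν hν => hopt.2 ν hν g⟩

/-- The set of girls whose partner in `μ` differs from that in `μ0`. -/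
def Dset (μ0 μ : Equiv.Perm (Fin n)) : Finset (Fin n) :=
  Finset.univ.filter (fun g => μ.symm g ≠ μ0.symm g)

lemma mem_Dset {μ0 μ : Equiv.Perm (Fin n)} {g : Fin n} :
    g ∈ Dset μ0 μ ↔ μ.symm g ≠ μ0.symm g := by simp [Dset]

lemma Dset_nonempty {μ0 μ : Equiv.Perm (Fin n)} (h : μ ≠ μ0) : (Dset μ0 μ).Nonempty := by
  by_contra hcon
  rw [Finset.not_nonempty_iff_eq_empty, Finset.eq_empty_iff_forall_notMem] at hcon
  apply h
  have hsymm : μ.symm = μ0.symm := by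
    apply Equiv.ext
    intro g
    have := hcon g
    rw [mem_Dset, not_not] at this
    exact this
  rw [← μ.symm_symm, hsymm, μ0.symm_symm]

lemma two_le_card_Dset {μ0 μ : Equiv.Perm (Fin n)} (h : μ ≠ μ0) : 2 ≤ (Dset μ0 μ).card := by
  obtain ⟨g0, hg0⟩ := Dset_nonempty h
  have hg0' : μ.symm g0 ≠ μ0.symm g0 := mem_Dset.mp hg0
  rw [show (2:ℕ) = 1 + 1 from rfl, Nat.add_one_le_iff, Finset.one_lt_card]
  by_contra hcon
  push_neg at hcon
  -- so every element of Dset equals g0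
  have huniq : ∀ g ∈ Dset μ0 μ, g = g0 := fun g hg => hcon g hg g0 hg0
  set g' := μ (μ0.symm g0) with hg'
  have hμs : μ.symm g' = μ0.symm g0 := by simp [hg']
  have hg'g0 : g' = g0 := by
    by_cases hmem : g' ∈ Dset μ0 μ
    · exact huniq g' hmem
    · rw [mem_Dset, not_not] at hmem
      exact μ0.symm.injective (by rw [← hmem, hμs])
  rw [hg'g0] at hμs
  exact hg0' hμs

lemma Dset_gb_subset_left {μ0 μ ν σ : Equiv.Perm (Fin n)} (hopt : I.GirlOptimal μ0)
    (hσ : I.Stable σ) (hf : ∀ g, σ.symm g = I.fbest μ ν g) :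
    Dset μ0 σ ⊆ Dset μ0 μ := by
  intro g hg
  rw [mem_Dset] at hg ⊢
  by_contra hcon
  apply hg
  apply I.hG g
  apply le_antisymm
  · rw [hf g, ← hcon]
    exact I.fbest_le_left μ ν g
  · exact hopt.2 σ hσ g

lemma Dset_gb_subset_right {μ0 μ ν σ : Equiv.Perm (Fin n)} (hopt : I.GirlOptimal μ0)
    (hσ : I.Stable σ) (hf : ∀ g, σ.symm g = I.fbest μ ν g) :
    Dset μ0 σ ⊆ Dset μ0 ν := by
  intro g hg
  rw [mem_Dset] at hg ⊢
  by_contra hcon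
  apply hg
  apply I.hG g
  apply le_antisymm
  · rw [hf g, ← hcon]
    exact I.fbest_le_right μ ν g
  · exact hopt.2 σ hσ g


end SMInst


/-- In any stable matching instance with `n` boys and `n` girls, the minimum winning
coalition of girls has cardinality at most `⌊n/2⌋`: there is a winning coalition of
cardinality at most `⌊n/2⌋`. -/
theorem minimum_winning_coalition_le {n : ℕ} (I : SMInst n)
    (μ0 : Equiv.Perm (Fin n)) (hopt : I.GirlOptimal μ0) :
    ∃ F : Finset (Fin n), I.Winning μ0 F ∧ F.card ≤ n / 2 := by
  classical
  set S : Finset (Finset (Fin n)) :=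
    (Finset.univ.filter (fun μ => I.Stable μ ∧ μ ≠ μ0)).image (SMInst.Dset μ0) with hS
  have hmemS : ∀ D, D ∈ S ↔ ∃ μ, (I.Stable μ ∧ μ ≠ μ0) ∧ SMInst.Dset μ0 μ = D := by
    intro D
    rw [hS, Finset.mem_image]
    simp
  have hDcard : ∀ D ∈ S, 2 ≤ D.card := by
    intro D hD
    obtain ⟨μ, ⟨_, hne⟩, rfl⟩ := (hmemS D).mp hD
    exact SMInst.two_le_card_Dset hne
  set M : Finset (Finset (Fin n)) :=
    S.filter (fun D => ∀ D' ∈ S, D' ⊆ D → D' = D) with hM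
  have hMS : M ⊆ S := Finset.filter_subset _ _
  have hMmin : ∀ D ∈ M, ∀ D' ∈ S, D' ⊆ D → D' = D := by
    intro D hD
    exact (Finset.mem_filter.mp hD).2
  -- every set in S contains a minimal one
  have hminEx : ∀ D ∈ S, ∃ m ∈ M, m ⊆ D := by
    intro D hD
    obtain ⟨m, hmT, hmin⟩ := Finset.exists_minimal (s := S.filter (· ⊆ D)) ⟨D, by simp [hD]⟩
    obtain ⟨hmS, hmD⟩ := Finset.mem_filter.mp hmT
    refine ⟨m, ?_, hmD⟩
    rw [hM, Finset.mem_filter]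
    refine ⟨hmS, fun D' hD' hsub => ?_⟩
    have hD'T : D' ∈ S.filter (· ⊆ D) := Finset.mem_filter.mpr ⟨hD', hsub.trans hmD⟩
    have hnl := hmin hD'T
    exact Finset.Subset.antisymm hsub (hnl hsub)
  -- minimal sets are pairwise disjoint
  have hdisj : ∀ D1 ∈ M, ∀ D2 ∈ M, D1 ≠ D2 → Disjoint D1 D2 := by
    intro D1 hD1 D2 hD2 hne
    rw [Finset.disjoint_left]
    intro g0 hg1 hg2
    obtain ⟨μ, ⟨hμ, _⟩, rfl⟩ := (hmemS D1).mp (hMS hD1)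
    obtain ⟨ν, ⟨hν, _⟩, rfl⟩ := (hmemS D2).mp (hMS hD2)
    obtain ⟨σ, hσ, hσf⟩ := I.exists_gb hμ hν
    have hg1' : ν.symm g0 ≠ μ0.symm g0 := SMInst.mem_Dset.mp hg2
    have hg0' : μ.symm g0 ≠ μ0.symm g0 := SMInst.mem_Dset.mp hg1
    have hg0σ : g0 ∈ SMInst.Dset μ0 σ := by
      rw [SMInst.mem_Dset, hσf g0]
      rcases I.fbest_or μ ν g0 with h | h <;> rw [h]
      · exact hg0'
      · exact hg1'
    have hσne : σ ≠ μ0 := by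
      intro h
      rw [h, SMInst.mem_Dset] at hg0σ
      exact hg0σ rfl
    have hσS : SMInst.Dset μ0 σ ∈ S := (hmemS _).mpr ⟨σ, ⟨hσ, hσne⟩, rfl⟩
    have h1 := hMmin _ hD1 _ hσS (I.Dset_gb_subset_left hopt hσ hσf)
    have h2 := hMmin _ hD2 _ hσS (I.Dset_gb_subset_right hopt hσ hσf)
    exact hne (h1 ▸ h2 ▸ rfl)
  have hMne : ∀ D ∈ M, D.Nonempty := by
    intro D hD
    have := hDcard D (hMS hD)
    rw [← Finset.card_pos]
    omega
  refine ⟨M.attach.image (fun D => D.1.min' (hMne D.1 D.2)), ?_, ?_⟩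
  · -- Winning
    apply Set.eq_singleton_iff_unique_mem.mpr
    constructor
    · exact ⟨hopt.1, fun g _ => (I.best_iff hopt hopt.1 g).mpr rfl⟩
    · rintro μ ⟨hst, hbF⟩
      by_contra hne
      have hDS : SMInst.Dset μ0 μ ∈ S := (hmemS _).mpr ⟨μ, ⟨hst, hne⟩, rfl⟩
      obtain ⟨m, hmM, hmsub⟩ := hminEx _ hDS
      have hgF : m.min' (hMne m hmM) ∈ M.attach.image (fun D => D.1.min' (hMne D.1 D.2)) :=
        Finset.mem_image.mpr ⟨⟨m, hmM⟩, Finset.mem_attach _ _, rfl⟩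
      have hgD : m.min' (hMne m hmM) ∈ SMInst.Dset μ0 μ := hmsub (Finset.min'_mem _ _)
      have hb := hbF _ hgF
      rw [I.best_iff hopt hst] at hb
      exact (SMInst.mem_Dset.mp hgD) hb
  · -- cardinality
    have hcard1 : (M.attach.image (fun D => D.1.min' (hMne D.1 D.2))).card ≤ M.card := by
      refine (Finset.card_image_le).trans ?_
      simp
    refine hcard1.trans ?_
    rw [Nat.le_div_iff_mul_le (by norm_num : 0 < 2)]
    have hsum : M.card * 2 = ∑ D ∈ M, 2 := by
      rw [Finset.sum_const, smul_eq_mul]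
    have hsum2 : ∑ D ∈ M, 2 ≤ ∑ D ∈ M, D.card :=
      Finset.sum_le_sum (fun D hD => hDcard D (hMS hD))
    have hbu : ∑ D ∈ M, D.card = (M.biUnion id).card :=
      (Finset.card_biUnion hdisj).symm
    have hle : (M.biUnion id).card ≤ n := by
      have := Finset.card_le_univ (M.biUnion id)
      simpa using this
    omega
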